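/- arXiv:1512.07091 — 3 statements merged into one kernel-verified Lean document; each statement's English description precedes it below -/
import Mathlib

section
/- Let A be an SPD n×n matrix, P an n×m matrix with full column rank, A_c := PᵀAP, and T := P·A_c⁻¹·Pᵀ·A. Let S be an n×n matrix with ‖S·u‖_A ≤ ‖u‖_A for all u ∈ ℝⁿ, let k ∈ ℕ, and let ε ≥ 0 be such that ‖Sᵏ·(I−T)·Sᵏ·u‖_A ≤ ε·‖u‖_A for all u ∈ ℝⁿ. Let W_c be an m×m matrix and q_c ≥ 0 with ‖W_c·x‖_{A_c} ≤ q_c·‖x‖_{A_c} for all x ∈ ℝᵐ. Then the matrix W := Sᵏ·(I − P·(I − W_c²)·A_c⁻¹·Pᵀ·A)·Sᵏ satisfies ‖W·u‖_A ≤ (ε + q_c²)·‖u‖_A for all u ∈ ℝⁿ. -/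
/-!
With `T := P A_c⁻¹ Pᵀ A` and `v := Sᵏ u`, the identity
`I − P (I − W_c²) A_c⁻¹ Pᵀ A = (I − T) + P W_c² A_c⁻¹ Pᵀ A` splits `W u` into `Sᵏ (I − T) Sᵏ u`,
bounded by hypothesis, and the coarse-grid term `Sᵏ P W_c² x` with `x := A_c⁻¹ Pᵀ A v`.
Since `P` is an isometry from `‖·‖_{A_c}` to `‖·‖_A` and `P x = T v`, the latter has `A`-norm at most
`‖W_c² x‖_{A_c} ≤ q_c² ‖x‖_{A_c} = q_c² ‖T v‖_A ≤ q_c² ‖u‖_A`, the last step because `T` is the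
`A`-orthogonal projection onto the range of `P` and `S` is `A`-contractive.
-/

open Matrix

/-- The `Q`-norm of a vector: `‖v‖_Q := √(vᵀ Q v)`. -/
noncomputable def matNorm {n : ℕ} (Q : Matrix (Fin n) (Fin n) ℝ) (v : Fin n → ℝ) : ℝ :=
  Real.sqrt (v ⬝ᵥ Q *ᵥ v)

section Algebra

variable {R : Type*} [CommRing R] {ι κ ν : Type*} [Fintype ι] [Fintype κ] [Fintype ν]

theorem dotProduct_mulVec_mulVec_mulVec (M : Matrix ι κ R) (Q : Matrix ι ι R)
    (N : Matrix ι ν R) (x : κ → R) (y : ν → R) :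
    (M *ᵥ x) ⬝ᵥ Q *ᵥ (N *ᵥ y) = x ⬝ᵥ (Mᵀ * Q * N) *ᵥ y := by
  rw [mulVec_mulVec, dotProduct_mulVec, vecMul_mulVec, ← dotProduct_mulVec, Matrix.mul_assoc]

variable [DecidableEq κ]

/-- The `A`-orthogonal projection onto the range of `P` (the coarse-grid correction `T`). -/
noncomputable def galerkinProjection (A : Matrix ι ι R) (P : Matrix ι κ R) : Matrix ι ι R :=
  P * (Pᵀ * A * P)⁻¹ * (Pᵀ * A)

theorem galerkinProjection_mul_self {A : Matrix ι ι R} {P : Matrix ι κ R}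
    (hAc : IsUnit (Pᵀ * A * P).det) :
    galerkinProjection A P * galerkinProjection A P = galerkinProjection A P := by
  calc P * (Pᵀ * A * P)⁻¹ * (Pᵀ * A) * (P * (Pᵀ * A * P)⁻¹ * (Pᵀ * A))
      = P * ((Pᵀ * A * P)⁻¹ * (Pᵀ * A * P * (Pᵀ * A * P)⁻¹)) * (Pᵀ * A) := by
        simp only [Matrix.mul_assoc]
    _ = P * (Pᵀ * A * P)⁻¹ * (Pᵀ * A) := by
        rw [mul_nonsing_inv _ hAc, Matrix.mul_one]

theorem galerkinProjection_transpose_mul {A : Matrix ι ι R} (hA : Aᵀ = A) (P : Matrix ι κ R) :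
    (galerkinProjection A P)ᵀ * A = A * galerkinProjection A P := by
  simp only [galerkinProjection, transpose_mul, transpose_transpose, transpose_nonsing_inv, hA,
    Matrix.mul_assoc]

end Algebra

theorem mulVec_injective_of_rank_eq_card {K : Type*} [Field K] {ι κ : Type*} [Fintype ι]
    [Fintype κ] {P : Matrix ι κ K} (hP : P.rank = Fintype.card κ) :
    Function.Injective P.mulVec := by
  have hker : Module.finrank K (LinearMap.ker P.mulVecLin) = 0 := by
    have hsum := P.mulVecLin.finrank_range_add_finrank_ker
    rw [Module.finrank_fintype_fun_eq_card, ← hP, Matrix.rank] at hsum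
    omega
  exact LinearMap.ker_eq_bot.mp (Submodule.finrank_eq_zero.mp hker)

theorem isUnit_det_transpose_mul_mul_of_posDef {ι κ : Type*} [Fintype ι] [Fintype κ]
    [DecidableEq κ] {A : Matrix ι ι ℝ} (hA : A.PosDef) {P : Matrix ι κ ℝ}
    (hP : Function.Injective P.mulVec) : IsUnit (Pᵀ * A * P).det := by
  have hAc := hA.conjTranspose_mul_mul_same hP
  rw [conjTranspose_eq_transpose_of_trivial] at hAc
  exact isUnit_iff_ne_zero.mpr hAc.det_pos.ne'

section MatNorm

variable {n : ℕ}

theorem matNorm_mulVec {m : ℕ} (Q : Matrix (Fin n) (Fin n) ℝ) (M : Matrix (Fin n) (Fin m) ℝ)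
    (x : Fin m → ℝ) : matNorm Q (M *ᵥ x) = matNorm (Mᵀ * Q * M) x := by
  rw [matNorm, matNorm, dotProduct_mulVec_mulVec_mulVec]

open scoped MatrixOrder in
theorem matNorm_eq_norm_sqrt_mulVec {A : Matrix (Fin n) (Fin n) ℝ} (hA : A.PosSemidef)
    (v : Fin n → ℝ) :
    matNorm A v = ‖(WithLp.toLp 2 (CFC.sqrt A *ᵥ v) : EuclideanSpace ℝ (Fin n))‖ := by
  have hsqrt : (CFC.sqrt A)ᵀ = CFC.sqrt A := by
    rw [← conjTranspose_eq_transpose_of_trivial]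
    exact (nonneg_iff_posSemidef.mp (CFC.sqrt_nonneg A)).1.eq
  have hsq : v ⬝ᵥ A *ᵥ v = (CFC.sqrt A *ᵥ v) ⬝ᵥ (CFC.sqrt A *ᵥ v) := by
    conv_lhs => rw [← CFC.sqrt_mul_sqrt_self A hA.nonneg]
    rw [← mulVec_mulVec, dotProduct_mulVec, ← mulVec_transpose, hsqrt]
  rw [matNorm, hsq, EuclideanSpace.norm_eq]
  simp [dotProduct, Real.norm_eq_abs, sq]

theorem matNorm_add_le {A : Matrix (Fin n) (Fin n) ℝ} (hA : A.PosSemidef) (a b : Fin n → ℝ) :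
    matNorm A (a + b) ≤ matNorm A a + matNorm A b := by
  simp only [matNorm_eq_norm_sqrt_mulVec hA, mulVec_add, WithLp.toLp_add]
  exact norm_add_le _ _

theorem matNorm_pow_mulVec_le {Q M : Matrix (Fin n) (Fin n) ℝ} {q : ℝ} (hq : 0 ≤ q)
    (hM : ∀ v, matNorm Q (M *ᵥ v) ≤ q * matNorm Q v) (j : ℕ) (v : Fin n → ℝ) :
    matNorm Q (M ^ j *ᵥ v) ≤ q ^ j * matNorm Q v := by
  induction j generalizing v with
  | zero => simp
  | succ j ih =>
    calc matNorm Q (M ^ (j + 1) *ᵥ v) = matNorm Q (M ^ j *ᵥ (M *ᵥ v)) := by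
          rw [pow_succ, mulVec_mulVec]
      _ ≤ q ^ j * (q * matNorm Q v) := (ih _).trans (by gcongr; exact hM v)
      _ = q ^ (j + 1) * matNorm Q v := by ring

theorem matNorm_mulVec_le_of_mul_self {A T : Matrix (Fin n) (Fin n) ℝ} (hA : A.PosSemidef)
    (hT : T * T = T) (hTA : Tᵀ * A = A * T) (v : Fin n → ℝ) :
    matNorm A (T *ᵥ v) ≤ matNorm A v := by
  have hcompl : (1 - T)ᵀ * A * (1 - T) = A - A * T := by
    rw [transpose_sub, transpose_one]
    have : (1 - Tᵀ) * A * (1 - T) = A - A * T - Tᵀ * A + Tᵀ * A * T := by noncomm_ring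
    rw [this, hTA, Matrix.mul_assoc, hT]
    abel
  have hnonneg : 0 ≤ v ⬝ᵥ (A - A * T) *ᵥ v := by
    rw [← hcompl, ← dotProduct_mulVec_mulVec_mulVec]
    simpa using hA.dotProduct_mulVec_nonneg ((1 - T) *ᵥ v)
  rw [matNorm_mulVec, hTA, Matrix.mul_assoc, hT, matNorm, matNorm]
  rw [sub_mulVec, dotProduct_sub] at hnonneg
  exact Real.sqrt_le_sqrt (by linarith)

end MatNorm

theorem stmt3_general {n m : ℕ} (A : Matrix (Fin n) (Fin n) ℝ) (hA : A.PosDef)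
    (P : Matrix (Fin n) (Fin m) ℝ) (hP : P.rank = m)
    (T : Matrix (Fin n) (Fin n) ℝ) (hT : T = P * (Pᵀ * A * P)⁻¹ * (Pᵀ * A))
    (S : Matrix (Fin n) (Fin n) ℝ)
    (hS : ∀ u : Fin n → ℝ, matNorm A (S *ᵥ u) ≤ matNorm A u)
    (k : ℕ) (ε : ℝ)
    (hSk : ∀ u : Fin n → ℝ,
        matNorm A ((S ^ k * (1 - T) * S ^ k) *ᵥ u) ≤ ε * matNorm A u)
    (Wc : Matrix (Fin m) (Fin m) ℝ) (qc : ℝ) (hqc : 0 ≤ qc)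
    (hWc : ∀ x : Fin m → ℝ,
        matNorm (Pᵀ * A * P) (Wc *ᵥ x) ≤ qc * matNorm (Pᵀ * A * P) x)
    (W : Matrix (Fin n) (Fin n) ℝ)
    (hW : W = S ^ k * (1 - P * (1 - Wc ^ 2) * (Pᵀ * A * P)⁻¹ * (Pᵀ * A)) * S ^ k) :
    ∀ u : Fin n → ℝ, matNorm A (W *ᵥ u) ≤ (ε + qc ^ 2) * matNorm A u := by
  intro u
  set Ac := Pᵀ * A * P
  have hAcdet : IsUnit Ac.det := isUnit_det_transpose_mul_mul_of_posDef hA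
    (mulVec_injective_of_rank_eq_card (by rwa [Fintype.card_fin]))
  have hTT : T * T = T := by rw [hT]; exact galerkinProjection_mul_self hAcdet
  have hTA : Tᵀ * A = A * T := by
    rw [hT]; exact galerkinProjection_transpose_mul hA.isHermitian.eq P
  have hSpow : ∀ v, matNorm A (S ^ k *ᵥ v) ≤ matNorm A v := by
    simpa using matNorm_pow_mulVec_le zero_le_one (by simpa using hS) k
  set v := S ^ k *ᵥ u
  set x := (Ac⁻¹ * (Pᵀ * A)) *ᵥ v
  have hPx : P *ᵥ x = T *ᵥ v := by rw [mulVec_mulVec, hT, Matrix.mul_assoc]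
  have hsplit : W *ᵥ u = (S ^ k * (1 - T) * S ^ k) *ᵥ u + S ^ k *ᵥ (P *ᵥ (Wc ^ 2 *ᵥ x)) := by
    simp only [v, x, hW, hT, mulVec_mulVec, ← add_mulVec, pow_two, Matrix.mul_sub,
      Matrix.sub_mul, Matrix.mul_one, Matrix.mul_assoc]
    congr 1
    abel
  have hcoarse : matNorm A (S ^ k *ᵥ (P *ᵥ (Wc ^ 2 *ᵥ x))) ≤ qc ^ 2 * matNorm A u :=
    calc matNorm A (S ^ k *ᵥ (P *ᵥ (Wc ^ 2 *ᵥ x)))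
        ≤ matNorm Ac (Wc ^ 2 *ᵥ x) := (hSpow _).trans_eq (matNorm_mulVec A P _)
      _ ≤ qc ^ 2 * matNorm Ac x := matNorm_pow_mulVec_le hqc hWc 2 x
      _ = qc ^ 2 * matNorm A (T *ᵥ v) := by rw [← hPx, matNorm_mulVec A P x]
      _ ≤ qc ^ 2 * matNorm A u := by
        gcongr
        exact (matNorm_mulVec_le_of_mul_self hA.posSemidef hTT hTA v).trans (hSpow u)
  calc matNorm A (W *ᵥ u)
      ≤ matNorm A ((S ^ k * (1 - T) * S ^ k) *ᵥ u)
        + matNorm A (S ^ k *ᵥ (P *ᵥ (Wc ^ 2 *ᵥ x))) := by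
        rw [hsplit]; exact matNorm_add_le hA.posSemidef _ _
    _ ≤ ε * matNorm A u + qc ^ 2 * matNorm A u := add_le_add (hSk u) hcoarse
    _ = (ε + qc ^ 2) * matNorm A u := by ring

/-- one-level recursion step for the W-cycle iteration matrix.
If `‖S u‖_A ≤ ‖u‖_A`, `‖Sᵏ (I−T) Sᵏ u‖_A ≤ ε ‖u‖_A`, and the coarse iteration
matrix satisfies `‖W_c x‖_{A_c} ≤ q_c ‖x‖_{A_c}`, then
`W = Sᵏ (I − P (I − W_c²) A_c⁻¹ Pᵀ A) Sᵏ` satisfies `‖W u‖_A ≤ (ε + q_c²) ‖u‖_A`. -/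
theorem stmt3 {n m : ℕ} (A : Matrix (Fin n) (Fin n) ℝ) (hA : A.PosDef)
    (P : Matrix (Fin n) (Fin m) ℝ) (hP : P.rank = m)
    (T : Matrix (Fin n) (Fin n) ℝ) (hT : T = P * (Pᵀ * A * P)⁻¹ * (Pᵀ * A))
    (S : Matrix (Fin n) (Fin n) ℝ)
    (hS : ∀ u : Fin n → ℝ, matNorm A (S *ᵥ u) ≤ matNorm A u)
    (k : ℕ) (ε : ℝ) (hε : 0 ≤ ε)
    (hSk : ∀ u : Fin n → ℝ,
        matNorm A ((S ^ k * (1 - T) * S ^ k) *ᵥ u) ≤ ε * matNorm A u)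
    (Wc : Matrix (Fin m) (Fin m) ℝ) (qc : ℝ) (hqc : 0 ≤ qc)
    (hWc : ∀ x : Fin m → ℝ,
        matNorm (Pᵀ * A * P) (Wc *ᵥ x) ≤ qc * matNorm (Pᵀ * A * P) x)
    (W : Matrix (Fin n) (Fin n) ℝ)
    (hW : W = S ^ k * (1 - P * (1 - Wc ^ 2) * (Pᵀ * A * P)⁻¹ * (Pᵀ * A)) * S ^ k) :
    ∀ u : Fin n → ℝ, matNorm A (W *ᵥ u) ≤ (ε + qc ^ 2) * matNorm A u :=
  stmt3_general A hA P hP T hT S hS k ε hSk Wc qc hqc hWc W hW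
end

section
/- Let N ≥ 0 be an integer and for each ℓ ∈ {0,…,N} let A_ℓ be an SPD n_ℓ×n_ℓ real matrix. For each ℓ ∈ {1,…,N} let P_ℓ be an n_ℓ×n_{ℓ−1} matrix with full column rank such that A_{ℓ−1} = P_ℓᵀ·A_ℓ·P_ℓ, let L_ℓ be an SPD n_ℓ×n_ℓ matrix, and set T_{ℓ−1} := P_ℓ·A_{ℓ−1}⁻¹·P_ℓᵀ·A_ℓ. Assume there are constants C_I, C_A > 0 such that for all ℓ ∈ {1,…,N} and all u ∈ ℝ^{n_ℓ}: uᵀ·A_ℓ·u ≤ C_I·uᵀ·L_ℓ·u and ((I−T_{ℓ−1})u)ᵀ·L_ℓ·((I−T_{ℓ−1})u) ≤ C_A·uᵀ·A_ℓ·u. Fix τ ∈ (0, 1/C_I], set ν₀ := C_A/τ, let ν be an even integer with ν > 4·ν₀, and set S_ℓ := I − τ·L_ℓ⁻¹·A_ℓ. Define the W-cycle iteration matrices recursively by W_0 := 0 and W_ℓ := S_ℓ^{ν/2}·(I − P_ℓ·(I − W_{ℓ−1}²)·A_{ℓ−1}⁻¹·P_ℓᵀ·A_ℓ)·S_ℓ^{ν/2}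 for ℓ ≥ 1. Then for every ℓ ∈ {0,…,N} and every u ∈ ℝ^{n_ℓ}: ‖W_ℓ·u‖_{A_ℓ} ≤ (2·ν₀/ν)·‖u‖_{A_ℓ}, i.e., the W-cycle multigrid method with ν/2 pre- and ν/2 post-smoothing steps converges in the energy norm with rate 2ν₀/ν < 1/2. -/
/-!
Let `T = P A_c⁻¹ Pᵀ A` be the `A`-orthogonal projection onto the coarse space and
`S = I - τ L⁻¹ A` the smoother. Since `τ A ≤ L`, both `A S` and `A (I - S)` are positive
semidefinite, so `j ↦ xᵀ A Sʲ x` is convex and decreasing; comparing its first differences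
gives the smoothing property `(2m + 1) τ ‖L⁻¹ A Sᵐ x‖²_L ≤ ‖x‖²_A`. Together with the
approximation property `‖(I - T) v‖²_A ≤ C_A ‖L⁻¹ A v‖²_L` this shows that the two-grid
operator `E = Sᵐ (I - T) Sᵐ`, which is `A`-self-adjoint and nonnegative, satisfies
`‖E‖_A ≤ ν₀ / (2m + 1)`. The W-cycle operator differs from `E` by `Sᵐ P W² A_c⁻¹ Pᵀ A Sᵐ`,
whose `A`-norm is at most `δ²` if `‖W‖_{A_c} ≤ δ`; with `δ = 2ν₀/ν < 1/2` one has
`ν₀/(ν + 1) + δ² ≤ δ`, and induction on the level finishes the proof.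
-/

open Matrix

lemma Matrix.PosSemidef.transpose_eq {ι : Type*} {M : Matrix ι ι ℝ} (hM : M.PosSemidef) :
    Mᵀ = M := by
  simpa using hM.isHermitian.eq

section QuadraticForms

variable {ι κ : Type*} [Fintype ι] [Fintype κ]

lemma mulVec_dotProduct_mulVec (M : Matrix ι ι ℝ) (B C : Matrix ι κ ℝ) (x y : κ → ℝ) :
    (B *ᵥ x) ⬝ᵥ M *ᵥ (C *ᵥ y) = x ⬝ᵥ (Bᵀ * M * C) *ᵥ y := by
  rw [dotProduct_comm, ← dotProduct_transpose_mulVec, mulVec_mulVec, mulVec_mulVec,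
    Matrix.mul_assoc]

lemma Matrix.PosSemidef.dotProduct_mulVec_self_nonneg {M : Matrix ι ι ℝ} (hM : M.PosSemidef)
    (x : ι → ℝ) : 0 ≤ x ⬝ᵥ M *ᵥ x := by
  simpa using hM.dotProduct_mulVec_nonneg x

lemma Matrix.PosSemidef.transpose_mul_mul_same {M : Matrix ι ι ℝ} (hM : M.PosSemidef)
    (B : Matrix ι κ ℝ) : (Bᵀ * M * B).PosSemidef := by
  simpa using hM.conjTranspose_mul_mul_same B

lemma Matrix.PosSemidef.dotProduct_mulVec_sq_le [DecidableEq ι] {M : Matrix ι ι ℝ}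
    (hM : M.PosSemidef) (x y : ι → ℝ) : (x ⬝ᵥ M *ᵥ y) ^ 2 ≤ (x ⬝ᵥ M *ᵥ x) * (y ⬝ᵥ M *ᵥ y) := by
  simpa only [toBilin'_apply'] using M.toBilin'.apply_sq_le_of_symm
    (by simpa only [toBilin'_apply'] using hM.dotProduct_mulVec_self_nonneg)
    (LinearMap.BilinForm.isSymm_iff.mp (isSymm_toBilin'_iff_isSymm.mpr hM.transpose_eq)) x y

lemma Matrix.PosSemidef.dotProduct_mulVec_comm {M : Matrix ι ι ℝ} (hM : M.PosSemidef)
    (x y : ι → ℝ) : x ⬝ᵥ M *ᵥ y = y ⬝ᵥ M *ᵥ x := by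
  rw [← dotProduct_transpose_mulVec, hM.transpose_eq]

end QuadraticForms

section MatNorm

variable {p q : ℕ}

lemma matNorm_nonneg (M : Matrix (Fin p) (Fin p) ℝ) (x : Fin p → ℝ) : 0 ≤ matNorm M x :=
  Real.sqrt_nonneg _

lemma matNorm_mulVec_s5 (M : Matrix (Fin p) (Fin p) ℝ) (C : Matrix (Fin p) (Fin q) ℝ)
    (y : Fin q → ℝ) : matNorm M (C *ᵥ y) = matNorm (Cᵀ * M * C) y := by
  rw [matNorm, matNorm, mulVec_dotProduct_mulVec]

lemma matNorm_le_mul_of_le {M : Matrix (Fin p) (Fin p) ℝ} {x y : Fin p → ℝ} {c : ℝ}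
    (hc : 0 ≤ c) (h : x ⬝ᵥ M *ᵥ x ≤ c ^ 2 * (y ⬝ᵥ M *ᵥ y)) :
    matNorm M x ≤ c * matNorm M y := by
  rw [matNorm, matNorm, ← Real.sqrt_sq hc, ← Real.sqrt_mul (sq_nonneg c)]
  exact Real.sqrt_le_sqrt h

lemma matNorm_add_le_s5 {M : Matrix (Fin p) (Fin p) ℝ} (hM : M.PosSemidef) (x y : Fin p → ℝ) :
    matNorm M (x + y) ≤ matNorm M x + matNorm M y := by
  have hx := hM.dotProduct_mulVec_self_nonneg x
  have hy := hM.dotProduct_mulVec_self_nonneg y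
  have hcross : x ⬝ᵥ M *ᵥ y ≤ matNorm M x * matNorm M y := by
    rw [matNorm, matNorm, ← Real.sqrt_mul hx]
    exact Real.le_sqrt_of_sq_le (hM.dotProduct_mulVec_sq_le x y)
  have hexpand : (x + y) ⬝ᵥ M *ᵥ (x + y) =
      x ⬝ᵥ M *ᵥ x + 2 * (x ⬝ᵥ M *ᵥ y) + y ⬝ᵥ M *ᵥ y := by
    rw [mulVec_add, dotProduct_add, add_dotProduct, add_dotProduct,
      hM.dotProduct_mulVec_comm y x]
    ring
  have hxn : matNorm M x ^ 2 = x ⬝ᵥ M *ᵥ x := Real.sq_sqrt hx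
  have hyn : matNorm M y ^ 2 = y ⬝ᵥ M *ᵥ y := Real.sq_sqrt hy
  refine (Real.sqrt_le_left (add_nonneg (matNorm_nonneg M x) (matNorm_nonneg M y))).mpr ?_
  rw [hexpand]
  nlinarith

end MatNorm

section Smoothing

variable {ι : Type*} [Fintype ι] [DecidableEq ι] {A S : Matrix ι ι ℝ}

lemma pow_transpose_mul_eq (hSA : Sᵀ * A = A * S) (k : ℕ) : (S ^ k)ᵀ * A = A * S ^ k := by
  induction k with
  | zero => simp
  | succ k ih =>
    rw [pow_succ, transpose_mul, Matrix.mul_assoc, ih, ← Matrix.mul_assoc, hSA,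
      Matrix.mul_assoc, ← pow_succ', pow_succ]

def powForm (A S : Matrix ι ι ℝ) (x : ι → ℝ) (j : ℕ) : ℝ := x ⬝ᵥ (A * S ^ j) *ᵥ x

lemma powForm_add (hSA : Sᵀ * A = A * S) (a k b : ℕ) (x : ι → ℝ) :
    powForm A S x (a + k + b) = (S ^ a *ᵥ x) ⬝ᵥ (A * S ^ k) *ᵥ (S ^ b *ᵥ x) := by
  rw [powForm, mulVec_dotProduct_mulVec, Matrix.mul_assoc, Matrix.mul_assoc, ← Matrix.mul_assoc,
    pow_transpose_mul_eq hSA, Matrix.mul_assoc, ← pow_add, ← pow_add, add_assoc]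

lemma powForm_second_difference (hSA : Sᵀ * A = A * S) (a b : ℕ) (x : ι → ℝ) :
    powForm A S x (a + b) - 2 * powForm A S x (a + b + 1) + powForm A S x (a + b + 2) =
      (S ^ a *ᵥ ((1 - S) *ᵥ x)) ⬝ᵥ A *ᵥ (S ^ b *ᵥ ((1 - S) *ᵥ x)) := by
  have hdiff (c : ℕ) : S ^ c *ᵥ ((1 - S) *ᵥ x) = S ^ c *ᵥ x - S ^ (c + 1) *ᵥ x := by
    rw [sub_mulVec, one_mulVec, mulVec_sub, mulVec_mulVec, ← pow_succ]
  have hform (c d : ℕ) : (S ^ c *ᵥ x) ⬝ᵥ A *ᵥ (S ^ d *ᵥ x) = powForm A S x (c + d) := by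
    simpa using (powForm_add hSA c 0 d x).symm
  rw [hdiff, hdiff]
  simp only [mulVec_sub, dotProduct_sub, sub_dotProduct, hform]
  ring_nf

lemma powForm_sub_succ_antitone (hSA : Sᵀ * A = A * S) (hA : A.PosSemidef)
    (hAS : (A * S).PosSemidef) (x : ι → ℝ) :
    Antitone fun j => powForm A S x j - powForm A S x (j + 1) := by
  refine antitone_nat_of_succ_le fun j => ?_
  -- The second difference at `2i` is the `A`-form, at `2i + 1` the `A S`-form, of `Sⁱ (1 - S) x`.
  suffices 0 ≤ powForm A S x j - 2 * powForm A S x (j + 1) + powForm A S x (j + 2) by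
    linarith
  obtain ⟨i, rfl | rfl⟩ := Nat.even_or_odd' j
  · rw [two_mul, powForm_second_difference hSA]
    exact hA.dotProduct_mulVec_self_nonneg _
  · rw [show 2 * i + 1 = i + (i + 1) by ring, powForm_second_difference hSA, pow_succ',
      ← mulVec_mulVec, mulVec_mulVec _ A S]
    exact hAS.dotProduct_mulVec_self_nonneg _

lemma powForm_two_mul_sub_succ (hSA : Sᵀ * A = A * S) (i : ℕ) (x : ι → ℝ) :
    powForm A S x (2 * i) - powForm A S x (2 * i + 1) =
      (S ^ i *ᵥ x) ⬝ᵥ (A * (1 - S)) *ᵥ (S ^ i *ᵥ x) := by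
  rw [show 2 * i + 1 = i + 1 + i by ring, show 2 * i = i + 0 + i by ring,
    powForm_add hSA, powForm_add hSA, pow_zero, pow_one, mul_sub, sub_mulVec, dotProduct_sub]

lemma powForm_sub_succ_nonneg (hSA : Sᵀ * A = A * S) (hA : A.PosSemidef)
    (hAS : (A * S).PosSemidef) (hAS' : (A * (1 - S)).PosSemidef) (x : ι → ℝ) (j : ℕ) :
    0 ≤ powForm A S x j - powForm A S x (j + 1) := by
  have heven (i : ℕ) : 0 ≤ powForm A S x (2 * i) - powForm A S x (2 * i + 1) := by
    rw [powForm_two_mul_sub_succ hSA]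
    exact hAS'.dotProduct_mulVec_self_nonneg _
  obtain ⟨i, rfl | rfl⟩ := Nat.even_or_odd' j
  · exact heven i
  · exact (heven (i + 1)).trans (powForm_sub_succ_antitone hSA hA hAS x (by omega))

lemma dotProduct_mulVec_pow_le (hSA : Sᵀ * A = A * S) (hA : A.PosSemidef)
    (hAS : (A * S).PosSemidef) (hAS' : (A * (1 - S)).PosSemidef) (k : ℕ) (x : ι → ℝ) :
    (S ^ k *ᵥ x) ⬝ᵥ A *ᵥ (S ^ k *ᵥ x) ≤ x ⬝ᵥ A *ᵥ x := by
  have hanti : Antitone (powForm A S x) := antitone_nat_of_succ_le fun j =>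
    sub_nonneg.mp (powForm_sub_succ_nonneg hSA hA hAS hAS' x j)
  have h := hanti (Nat.zero_le (k + 0 + k))
  rw [powForm_add hSA] at h
  simpa [powForm] using h

theorem smoothing_property (hSA : Sᵀ * A = A * S) (hA : A.PosSemidef)
    (hAS : (A * S).PosSemidef) (m : ℕ) (x : ι → ℝ) :
    (2 * m + 1) * ((S ^ m *ᵥ x) ⬝ᵥ (A * (1 - S)) *ᵥ (S ^ m *ᵥ x)) ≤ x ⬝ᵥ A *ᵥ x := by
  have hsum := Finset.card_nsmul_le_sum (Finset.range (2 * m + 1))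
    (fun j => powForm A S x j - powForm A S x (j + 1))
    (powForm A S x (2 * m) - powForm A S x (2 * m + 1))
    fun j hj => powForm_sub_succ_antitone hSA hA hAS x (Nat.le_of_lt_succ (Finset.mem_range.mp hj))
  rw [Finset.sum_range_sub', Finset.card_range, nsmul_eq_mul, powForm_two_mul_sub_succ hSA] at hsum
  have htail : 0 ≤ powForm A S x (2 * m + 1) := by
    rw [show 2 * m + 1 = m + 1 + m by ring, powForm_add hSA, pow_one]
    exact hAS.dotProduct_mulVec_self_nonneg _
  have hzero : powForm A S x 0 = x ⬝ᵥ A *ᵥ x := by simp [powForm]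
  push_cast at hsum
  linarith

end Smoothing

section Richardson

variable {ι : Type*} [Fintype ι] [DecidableEq ι] {A L : Matrix ι ι ℝ} {τ : ℝ}

noncomputable def richardson (τ : ℝ) (L A : Matrix ι ι ℝ) : Matrix ι ι ℝ := 1 - τ • (L⁻¹ * A)

lemma transpose_inv_mul_mul (hA : A.PosSemidef) (hL : L.PosDef) :
    (L⁻¹ * A)ᵀ * A = A * (L⁻¹ * A) := by
  rw [transpose_mul, transpose_nonsing_inv, hL.posSemidef.transpose_eq, hA.transpose_eq,
    Matrix.mul_assoc]

lemma mul_inv_mul_eq_transpose_mul_mul (hA : A.PosSemidef) (hL : L.PosDef) :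
    A * (L⁻¹ * A) = (L⁻¹ * A)ᵀ * L * (L⁻¹ * A) := by
  rw [Matrix.mul_assoc _ L, mul_nonsing_inv_cancel_left _ _ hL.det_pos.ne'.isUnit,
    transpose_inv_mul_mul hA hL]

lemma richardson_transpose_mul (hA : A.PosSemidef) (hL : L.PosDef) :
    (richardson τ L A)ᵀ * A = A * richardson τ L A := by
  simp only [richardson, transpose_sub, transpose_one, transpose_smul, sub_mul, mul_sub,
    one_mul, mul_one, Matrix.smul_mul, Matrix.mul_smul, transpose_inv_mul_mul hA hL]

lemma mul_one_sub_richardson (hA : A.PosSemidef) (hL : L.PosDef) :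
    A * (1 - richardson τ L A) = τ • ((L⁻¹ * A)ᵀ * L * (L⁻¹ * A)) := by
  rw [richardson, sub_sub_cancel, Matrix.mul_smul, mul_inv_mul_eq_transpose_mul_mul hA hL]

lemma posSemidef_mul_one_sub_richardson (hA : A.PosSemidef) (hL : L.PosDef) (hτ : 0 ≤ τ) :
    (A * (1 - richardson τ L A)).PosSemidef := by
  rw [mul_one_sub_richardson hA hL]
  exact (hL.posSemidef.transpose_mul_mul_same _).smul hτ

lemma mul_richardson_eq (hA : A.PosSemidef) (hL : L.PosDef) :
    A * richardson τ L A = (richardson τ L A)ᵀ * A * richardson τ L A +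
      τ • ((L⁻¹ * A)ᵀ * (L - τ • A) * (L⁻¹ * A)) := by
  have hK := mul_inv_mul_eq_transpose_mul_mul hA hL
  simp only [richardson, transpose_sub, transpose_one, transpose_smul, sub_mul, mul_sub,
    one_mul, mul_one, Matrix.smul_mul, Matrix.mul_smul, transpose_inv_mul_mul hA hL, hK]
  module

lemma posSemidef_mul_richardson (hA : A.PosSemidef) (hL : L.PosDef) (hτ : 0 ≤ τ)
    (hLA : (L - τ • A).PosSemidef) : (A * richardson τ L A).PosSemidef := by
  rw [mul_richardson_eq hA hL]
  exact (hA.transpose_mul_mul_same _).add ((hLA.transpose_mul_mul_same _).smul hτ)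

end Richardson

section Projection

variable {ι : Type*} [Fintype ι] [DecidableEq ι] {A T : Matrix ι ι ℝ}

lemma mulVec_dotProduct_mulVec_self_le_sq {E : Matrix ι ι ℝ} {η : ℝ} (hA : A.PosSemidef)
    (hAE : (A * E).PosSemidef) (hη : ∀ x, x ⬝ᵥ (A * E) *ᵥ x ≤ η * (x ⬝ᵥ A *ᵥ x)) (x : ι → ℝ) :
    (E *ᵥ x) ⬝ᵥ A *ᵥ (E *ᵥ x) ≤ η ^ 2 * (x ⬝ᵥ A *ᵥ x) := by
  -- Cauchy–Schwarz for the form of `A E`, since `‖E x‖²_A = xᵀ (A E) (E x)`.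
  set z := E *ᵥ x
  have hβ : z ⬝ᵥ A *ᵥ z = x ⬝ᵥ (A * E) *ᵥ z := by
    rw [hAE.dotProduct_mulVec_comm, ← mulVec_mulVec]
  have hcs := hAE.dotProduct_mulVec_sq_le x z
  have hx := hAE.dotProduct_mulVec_self_nonneg x
  have hz := hAE.dotProduct_mulVec_self_nonneg z
  have hηx := hη x
  have hηz := hη z
  have hAz := hA.dotProduct_mulVec_self_nonneg z
  rw [← hβ] at hcs
  rcases hAz.eq_or_lt with h0 | hpos
  · rw [← h0]
    exact mul_nonneg (sq_nonneg η) (hA.dotProduct_mulVec_self_nonneg x)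
  · nlinarith [mul_le_mul hηx hηz hz (hx.trans hηx)]

lemma one_sub_transpose_mul (hTA : Tᵀ * A = A * T) : (1 - T)ᵀ * A = A * (1 - T) := by
  rw [transpose_sub, transpose_one, sub_mul, mul_sub, one_mul, mul_one, hTA]

lemma one_sub_transpose_mul_mul_one_sub (hT : IsIdempotentElem T) (hTA : Tᵀ * A = A * T) :
    (1 - T)ᵀ * A * (1 - T) = A * (1 - T) := by
  rw [one_sub_transpose_mul hTA, Matrix.mul_assoc, hT.one_sub.eq]

lemma dotProduct_mul_mulVec_le (hA : A.PosSemidef) (hT : IsIdempotentElem T)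
    (hTA : Tᵀ * A = A * T) (v : ι → ℝ) : v ⬝ᵥ (A * T) *ᵥ v ≤ v ⬝ᵥ A *ᵥ v := by
  have h := (hA.transpose_mul_mul_same (1 - T)).dotProduct_mulVec_self_nonneg v
  rw [one_sub_transpose_mul_mul_one_sub hT hTA, mul_sub, mul_one, sub_mulVec,
    dotProduct_sub] at h
  linarith

lemma dotProduct_mulVec_one_sub_le {L : Matrix ι ι ℝ} {C : ℝ} (hL : L.PosDef) (hC : 0 ≤ C)
    (hT : IsIdempotentElem T) (hTA : Tᵀ * A = A * T)
    (happrox : ∀ u, ((1 - T) *ᵥ u) ⬝ᵥ L *ᵥ ((1 - T) *ᵥ u) ≤ C * (u ⬝ᵥ A *ᵥ u))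
    (v : ι → ℝ) :
    ((1 - T) *ᵥ v) ⬝ᵥ A *ᵥ ((1 - T) *ᵥ v) ≤
      C * (((L⁻¹ * A) *ᵥ v) ⬝ᵥ L *ᵥ ((L⁻¹ * A) *ᵥ v)) := by
  have hα : ((1 - T) *ᵥ v) ⬝ᵥ A *ᵥ ((1 - T) *ᵥ v) =
      ((1 - T) *ᵥ v) ⬝ᵥ L *ᵥ ((L⁻¹ * A) *ᵥ v) :=
    calc ((1 - T) *ᵥ v) ⬝ᵥ A *ᵥ ((1 - T) *ᵥ v) = v ⬝ᵥ ((1 - T)ᵀ * A * 1) *ᵥ v := by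
          rw [mulVec_dotProduct_mulVec, one_sub_transpose_mul_mul_one_sub hT hTA, Matrix.mul_one,
            one_sub_transpose_mul hTA]
      _ = ((1 - T) *ᵥ v) ⬝ᵥ L *ᵥ ((L⁻¹ * A) *ᵥ v) := by
          rw [← mulVec_dotProduct_mulVec, one_mulVec, mulVec_mulVec _ L,
            mul_nonsing_inv_cancel_left _ _ hL.det_pos.ne'.isUnit]
  have hLw := happrox ((1 - T) *ᵥ v)
  rw [mulVec_mulVec, hT.one_sub.eq] at hLw
  have hcs := hL.posSemidef.dotProduct_mulVec_sq_le ((1 - T) *ᵥ v) ((L⁻¹ * A) *ᵥ v)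
  have hLz := hL.posSemidef.dotProduct_mulVec_self_nonneg ((L⁻¹ * A) *ᵥ v)
  have hLw0 := hL.posSemidef.dotProduct_mulVec_self_nonneg ((1 - T) *ᵥ v)
  rw [← hα] at hcs
  rcases le_or_gt (((1 - T) *ᵥ v) ⬝ᵥ A *ᵥ ((1 - T) *ᵥ v)) 0 with hα0 | hα0
  · exact hα0.trans (mul_nonneg hC hLz)
  · nlinarith

lemma mul_pow_mul_one_sub_mul_pow {S : Matrix ι ι ℝ} (hSA : Sᵀ * A = A * S)
    (hT : IsIdempotentElem T) (hTA : Tᵀ * A = A * T) (m : ℕ) :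
    A * (S ^ m * (1 - T) * S ^ m) = ((1 - T) * S ^ m)ᵀ * A * ((1 - T) * S ^ m) := by
  calc A * (S ^ m * (1 - T) * S ^ m) = (S ^ m)ᵀ * A * (1 - T) * S ^ m := by
        rw [pow_transpose_mul_eq hSA]; simp only [Matrix.mul_assoc]
    _ = (S ^ m)ᵀ * ((1 - T)ᵀ * A * (1 - T)) * S ^ m := by
        rw [one_sub_transpose_mul_mul_one_sub hT hTA, Matrix.mul_assoc (S ^ m)ᵀ]
    _ = ((1 - T) * S ^ m)ᵀ * A * ((1 - T) * S ^ m) := by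
        simp only [transpose_mul, Matrix.mul_assoc]

end Projection

section Galerkin

variable {ι κ : Type*} [Fintype ι] [Fintype κ] [DecidableEq κ]
  {A : Matrix ι ι ℝ} {Ac : Matrix κ κ ℝ} {P : Matrix ι κ ℝ}

noncomputable def coarseCorrection (A : Matrix ι ι ℝ) (Ac : Matrix κ κ ℝ) (P : Matrix ι κ ℝ) :
    Matrix ι ι ℝ :=
  P * Ac⁻¹ * (Pᵀ * A)

lemma isIdempotentElem_coarseCorrection (hGal : Ac = Pᵀ * A * P) (hAc : Ac.PosDef) :
    IsIdempotentElem (coarseCorrection A Ac P) := by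
  have h : Pᵀ * A * (P * Ac⁻¹) = 1 := by
    rw [← Matrix.mul_assoc, ← hGal, mul_nonsing_inv _ hAc.det_pos.ne'.isUnit]
  rw [IsIdempotentElem, coarseCorrection, Matrix.mul_assoc, ← Matrix.mul_assoc (Pᵀ * A), h,
    Matrix.one_mul]

lemma coarseCorrection_transpose_mul (hA : A.PosSemidef) (hAc : Ac.PosDef) :
    (coarseCorrection A Ac P)ᵀ * A = A * coarseCorrection A Ac P := by
  simp only [coarseCorrection, transpose_mul, transpose_transpose, transpose_nonsing_inv,
    hA.transpose_eq, hAc.posSemidef.transpose_eq, Matrix.mul_assoc]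

lemma restriction_transpose_mul_mul (hA : A.PosSemidef) (hAc : Ac.PosDef) :
    (Ac⁻¹ * (Pᵀ * A))ᵀ * Ac * (Ac⁻¹ * (Pᵀ * A)) = A * coarseCorrection A Ac P := by
  simp only [coarseCorrection, transpose_mul, transpose_transpose, transpose_nonsing_inv,
    hA.transpose_eq, hAc.posSemidef.transpose_eq, Matrix.mul_assoc,
    mul_nonsing_inv_cancel_left _ _ hAc.det_pos.ne'.isUnit]

lemma pow_mul_one_sub_mul_pow_eq [DecidableEq ι] (S : Matrix ι ι ℝ) (Wc : Matrix κ κ ℝ)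
    (m : ℕ) :
    S ^ m * (1 - P * (1 - Wc ^ 2) * Ac⁻¹ * (Pᵀ * A)) * S ^ m =
      S ^ m * (1 - coarseCorrection A Ac P) * S ^ m +
        S ^ m * P * Wc ^ 2 * (Ac⁻¹ * (Pᵀ * A)) * S ^ m := by
  have hcorr : P * (1 - Wc ^ 2) * Ac⁻¹ * (Pᵀ * A) =
      coarseCorrection A Ac P - P * Wc ^ 2 * (Ac⁻¹ * (Pᵀ * A)) := by
    simp only [coarseCorrection, Matrix.mul_sub, Matrix.sub_mul, Matrix.mul_one,
      Matrix.mul_assoc]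
  rw [hcorr, sub_sub_eq_add_sub, add_sub_right_comm, Matrix.mul_add, Matrix.add_mul]
  simp only [Matrix.mul_assoc]

end Galerkin

section TwoGrid

variable {ι κ : Type*} [Fintype ι] [DecidableEq ι] [Fintype κ] [DecidableEq κ]
  {A L : Matrix ι ι ℝ} {Ac : Matrix κ κ ℝ} {P : Matrix ι κ ℝ} {τ C : ℝ}

theorem twoGrid_form_le (hA : A.PosSemidef) (hL : L.PosDef) (hAc : Ac.PosDef)
    (hGal : Ac = Pᵀ * A * P) (hτ : 0 < τ) (hLA : (L - τ • A).PosSemidef) (hC : 0 ≤ C)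
    (happrox : ∀ u, ((1 - coarseCorrection A Ac P) *ᵥ u) ⬝ᵥ L *ᵥ
      ((1 - coarseCorrection A Ac P) *ᵥ u) ≤ C * (u ⬝ᵥ A *ᵥ u))
    (m : ℕ) (x : ι → ℝ) :
    x ⬝ᵥ (A * (richardson τ L A ^ m * (1 - coarseCorrection A Ac P) * richardson τ L A ^ m))
      *ᵥ x ≤ C / τ / (2 * m + 1) * (x ⬝ᵥ A *ᵥ x) := by
  have hSA : (richardson τ L A)ᵀ * A = A * richardson τ L A := richardson_transpose_mul hA hL
  have hT := isIdempotentElem_coarseCorrection hGal hAc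
  have hTA := coarseCorrection_transpose_mul (P := P) hA hAc
  have hsmooth := smoothing_property hSA hA (posSemidef_mul_richardson hA hL hτ.le hLA) m x
  rw [mul_one_sub_richardson hA hL, smul_mulVec, dotProduct_smul, smul_eq_mul,
    ← mulVec_dotProduct_mulVec] at hsmooth
  calc _ = ((1 - coarseCorrection A Ac P) *ᵥ (richardson τ L A ^ m *ᵥ x)) ⬝ᵥ
        A *ᵥ ((1 - coarseCorrection A Ac P) *ᵥ (richardson τ L A ^ m *ᵥ x)) := by
        rw [mul_pow_mul_one_sub_mul_pow hSA hT hTA, ← mulVec_dotProduct_mulVec]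
        simp only [mulVec_mulVec]
    _ ≤ C * (((L⁻¹ * A) *ᵥ (richardson τ L A ^ m *ᵥ x)) ⬝ᵥ
        L *ᵥ ((L⁻¹ * A) *ᵥ (richardson τ L A ^ m *ᵥ x))) :=
        dotProduct_mulVec_one_sub_le hL hC hT hTA happrox _
    _ ≤ C / τ / (2 * m + 1) * (x ⬝ᵥ A *ᵥ x) := by
        have h2m : (0 : ℝ) < 2 * m + 1 := by positivity
        rw [div_div, div_mul_eq_mul_div, le_div_iff₀ (mul_pos hτ h2m)]
        nlinarith [mul_le_mul_of_nonneg_left hsmooth hC]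

theorem twoGrid_contraction (hA : A.PosSemidef) (hL : L.PosDef) (hAc : Ac.PosDef)
    (hGal : Ac = Pᵀ * A * P) (hτ : 0 < τ) (hLA : (L - τ • A).PosSemidef) (hC : 0 ≤ C)
    (happrox : ∀ u, ((1 - coarseCorrection A Ac P) *ᵥ u) ⬝ᵥ L *ᵥ
      ((1 - coarseCorrection A Ac P) *ᵥ u) ≤ C * (u ⬝ᵥ A *ᵥ u))
    (m : ℕ) (x : ι → ℝ) :
    ((richardson τ L A ^ m * (1 - coarseCorrection A Ac P) * richardson τ L A ^ m) *ᵥ x) ⬝ᵥ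
        A *ᵥ ((richardson τ L A ^ m * (1 - coarseCorrection A Ac P) * richardson τ L A ^ m) *ᵥ x)
      ≤ (C / τ / (2 * m + 1)) ^ 2 * (x ⬝ᵥ A *ᵥ x) := by
  have hAE : (A * (richardson τ L A ^ m * (1 - coarseCorrection A Ac P) *
      richardson τ L A ^ m)).PosSemidef := by
    rw [mul_pow_mul_one_sub_mul_pow (richardson_transpose_mul hA hL)
      (isIdempotentElem_coarseCorrection hGal hAc) (coarseCorrection_transpose_mul hA hAc)]
    exact hA.transpose_mul_mul_same _
  exact mulVec_dotProduct_mulVec_self_le_sq hA hAE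
    (twoGrid_form_le hA hL hAc hGal hτ hLA hC happrox m) x

end TwoGrid

section WCycle

variable {p q : ℕ} {A L : Matrix (Fin p) (Fin p) ℝ} {Ac Wc : Matrix (Fin q) (Fin q) ℝ}
  {P : Matrix (Fin p) (Fin q) ℝ} {τ C δ : ℝ}

lemma matNorm_richardson_pow_le (hA : A.PosSemidef) (hL : L.PosDef) (hτ : 0 ≤ τ)
    (hLA : (L - τ • A).PosSemidef) (m : ℕ) (v : Fin p → ℝ) :
    matNorm A (richardson τ L A ^ m *ᵥ v) ≤ matNorm A v :=
  Real.sqrt_le_sqrt (dotProduct_mulVec_pow_le (richardson_transpose_mul hA hL) hA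
    (posSemidef_mul_richardson hA hL hτ hLA) (posSemidef_mul_one_sub_richardson hA hL hτ) m v)

theorem wCycle_step (hA : A.PosSemidef) (hL : L.PosDef) (hAc : Ac.PosDef)
    (hGal : Ac = Pᵀ * A * P) (hτ : 0 < τ) (hLA : (L - τ • A).PosSemidef) (hC : 0 ≤ C)
    (happrox : ∀ u, ((1 - coarseCorrection A Ac P) *ᵥ u) ⬝ᵥ L *ᵥ
      ((1 - coarseCorrection A Ac P) *ᵥ u) ≤ C * (u ⬝ᵥ A *ᵥ u))
    (m : ℕ) (hδ : 0 ≤ δ) (hrate : C / τ / (2 * m + 1) + δ ^ 2 ≤ δ)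
    (hWc : ∀ y, matNorm Ac (Wc *ᵥ y) ≤ δ * matNorm Ac y) (u : Fin p → ℝ) :
    matNorm A ((richardson τ L A ^ m * (1 - P * (1 - Wc ^ 2) * Ac⁻¹ * (Pᵀ * A)) *
      richardson τ L A ^ m) *ᵥ u) ≤ δ * matNorm A u := by
  rw [pow_mul_one_sub_mul_pow_eq, add_mulVec]
  set S := richardson τ L A
  set R := Ac⁻¹ * (Pᵀ * A)
  have hcoarse : (S ^ m * P * Wc ^ 2 * R * S ^ m) *ᵥ u =
      S ^ m *ᵥ (P *ᵥ (Wc *ᵥ (Wc *ᵥ (R *ᵥ (S ^ m *ᵥ u))))) := by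
    simp only [mulVec_mulVec, sq, Matrix.mul_assoc]
  have hSm (v : Fin p → ℝ) : matNorm A (S ^ m *ᵥ v) ≤ matNorm A v :=
    matNorm_richardson_pow_le hA hL hτ.le hLA m v
  have hP (y : Fin q → ℝ) : matNorm A (P *ᵥ y) = matNorm Ac y := by
    rw [matNorm_mulVec_s5, hGal]
  have hR (v : Fin p → ℝ) : matNorm Ac (R *ᵥ v) ≤ matNorm A v := by
    rw [matNorm_mulVec_s5, restriction_transpose_mul_mul hA hAc]
    exact Real.sqrt_le_sqrt (dotProduct_mul_mulVec_le hA
      (isIdempotentElem_coarseCorrection hGal hAc)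
      (coarseCorrection_transpose_mul hA hAc) v)
  have hE := matNorm_le_mul_of_le (by positivity)
    (twoGrid_contraction hA hL hAc hGal hτ hLA hC happrox m u)
  have hWc2 : matNorm A ((S ^ m * P * Wc ^ 2 * R * S ^ m) *ᵥ u) ≤ δ ^ 2 * matNorm A u := by
    rw [hcoarse]
    calc _ ≤ matNorm Ac (Wc *ᵥ (Wc *ᵥ (R *ᵥ (S ^ m *ᵥ u)))) := (hSm _).trans_eq (hP _)
      _ ≤ δ * (δ * matNorm Ac (R *ᵥ (S ^ m *ᵥ u))) :=
        (hWc _).trans (mul_le_mul_of_nonneg_left (hWc _) hδ)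
      _ ≤ δ * (δ * matNorm A u) := by gcongr; exact (hR _).trans (hSm _)
      _ = δ ^ 2 * matNorm A u := by ring
  calc _ ≤ _ := matNorm_add_le_s5 hA _ _
    _ ≤ C / τ / (2 * m + 1) * matNorm A u + δ ^ 2 * matNorm A u := add_le_add hE hWc2
    _ ≤ δ * matNorm A u := by
        rw [← add_mul]; exact mul_le_mul_of_nonneg_right hrate (matNorm_nonneg A u)

end WCycle

lemma posSemidef_sub_smul_of_le {ι : Type*} [Fintype ι] {A L : Matrix ι ι ℝ} {C τ : ℝ}
    (hA : A.PosSemidef) (hL : L.PosSemidef) (hC : 0 < C) (hτ0 : 0 ≤ τ) (hτ : τ ≤ 1 / C)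
    (hinv : ∀ u, u ⬝ᵥ A *ᵥ u ≤ C * (u ⬝ᵥ L *ᵥ u)) : (L - τ • A).PosSemidef := by
  refine .of_dotProduct_mulVec_nonneg (hL.isHermitian.sub (hA.smul hτ0).isHermitian) fun u => ?_
  have hτC : τ * C ≤ 1 := (le_div_iff₀ hC).mp hτ
  have hLu := hL.dotProduct_mulVec_self_nonneg u
  have hτu := mul_le_mul_of_nonneg_left (hinv u) hτ0
  simp only [star_trivial, sub_mulVec, smul_mulVec, dotProduct_sub, dotProduct_smul, smul_eq_mul]
  nlinarith

lemma wCycle_rate {ρ ν : ℝ} (hρ : 0 ≤ ρ) (hν : 4 * ρ < ν) :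
    ρ / (ν + 1) + (2 * ρ / ν) ^ 2 ≤ 2 * ρ / ν := by
  have hν0 : 0 < ν := by linarith
  have h1 : ρ / (ν + 1) ≤ ρ / ν := div_le_div_of_nonneg_left hρ hν0 (by linarith)
  have h2 : 2 * ρ / ν ≤ 1 / 2 := by rw [div_le_iff₀ hν0]; linarith
  have h3 : (2 * ρ / ν) ^ 2 ≤ ρ / ν := by
    calc (2 * ρ / ν) ^ 2 ≤ 1 / 2 * (2 * ρ / ν) := by
          rw [sq]; exact mul_le_mul_of_nonneg_right h2 (by positivity)
      _ = ρ / ν := by ring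
  linarith [show ρ / ν + ρ / ν = 2 * ρ / ν by ring]

theorem stmt5_general (N : ℕ) (n : ℕ → ℕ)
    (A L : ∀ ℓ : ℕ, Matrix (Fin (n ℓ)) (Fin (n ℓ)) ℝ)
    (P : ∀ ℓ : ℕ, Matrix (Fin (n ℓ)) (Fin (n (ℓ - 1))) ℝ)
    (hA : ∀ ℓ : ℕ, ℓ ≤ N → (A ℓ).PosDef)
    (hL : ∀ ℓ : ℕ, 1 ≤ ℓ → ℓ ≤ N → (L ℓ).PosDef)
    (hGal : ∀ ℓ : ℕ, 1 ≤ ℓ → ℓ ≤ N → A (ℓ - 1) = (P ℓ)ᵀ * A ℓ * P ℓ)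
    (C_I C_A : ℝ) (hCI : 0 < C_I) (hCA : 0 < C_A)
    (hinv : ∀ ℓ : ℕ, 1 ≤ ℓ → ℓ ≤ N → ∀ u : Fin (n ℓ) → ℝ,
        u ⬝ᵥ (A ℓ) *ᵥ u ≤ C_I * (u ⬝ᵥ (L ℓ) *ᵥ u))
    (happrox : ∀ ℓ : ℕ, 1 ≤ ℓ → ℓ ≤ N → ∀ u : Fin (n ℓ) → ℝ,
        ((1 - P ℓ * (A (ℓ - 1))⁻¹ * ((P ℓ)ᵀ * A ℓ)) *ᵥ u) ⬝ᵥ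
            (L ℓ) *ᵥ ((1 - P ℓ * (A (ℓ - 1))⁻¹ * ((P ℓ)ᵀ * A ℓ)) *ᵥ u)
          ≤ C_A * (u ⬝ᵥ (A ℓ) *ᵥ u))
    (τ : ℝ) (hτ0 : 0 < τ) (hτ1 : τ ≤ 1 / C_I)
    (ν : ℕ) (hνeven : Even ν) (hν : 4 * (C_A / τ) < (ν : ℝ))
    (S : ∀ ℓ : ℕ, Matrix (Fin (n ℓ)) (Fin (n ℓ)) ℝ)
    (hS : ∀ ℓ : ℕ, S ℓ = 1 - τ • ((L ℓ)⁻¹ * A ℓ))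
    (W : ∀ ℓ : ℕ, Matrix (Fin (n ℓ)) (Fin (n ℓ)) ℝ)
    (hW0 : W 0 = 0)
    (hWrec : ∀ ℓ : ℕ, 1 ≤ ℓ → ℓ ≤ N → W ℓ =
        (S ℓ) ^ (ν / 2) *
          (1 - P ℓ * (1 - (W (ℓ - 1)) ^ 2) * (A (ℓ - 1))⁻¹ * ((P ℓ)ᵀ * A ℓ)) *
          (S ℓ) ^ (ν / 2)) :
    ∀ ℓ : ℕ, ℓ ≤ N → ∀ u : Fin (n ℓ) → ℝ,
      matNorm (A ℓ) ((W ℓ) *ᵥ u) ≤ (2 * (C_A / τ) / (ν : ℝ)) * matNorm (A ℓ) u := by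
  obtain ⟨m, rfl⟩ := hνeven
  have hrate := wCycle_rate (div_pos hCA hτ0).le hν
  rw [show ((m + m : ℕ) : ℝ) + 1 = 2 * m + 1 by push_cast; ring] at hrate
  intro ℓ
  induction ℓ with
  | zero =>
    intro _ u
    simpa [hW0, matNorm] using mul_nonneg (by positivity) (matNorm_nonneg (A 0) u)
  | succ k ih =>
    intro hk u
    have hk1 : 1 ≤ k + 1 := le_add_self
    rw [hWrec _ hk1 hk, hS, show (m + m) / 2 = m by omega]
    exact wCycle_step (hA _ hk).posSemidef (hL _ hk1 hk) (hA k (by omega)) (hGal _ hk1 hk) hτ0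
      (posSemidef_sub_smul_of_le (hA _ hk).posSemidef (hL _ hk1 hk).posSemidef hCI hτ0.le hτ1
        (hinv _ hk1 hk))
      hCA.le (happrox _ hk1 hk) m (by positivity) hrate (ih (by omega)) u

/-- W-cycle multigrid convergence. Under the level-wise inverse
inequality (constant `C_I`) and approximation property (constant `C_A`), with
`τ ∈ (0, 1/C_I]`, `ν₀ = C_A/τ`, `ν` even with `ν > 4ν₀`, smoothers
`S_ℓ = I − τ L_ℓ⁻¹ A_ℓ`, and the W-cycle iteration matrices `W_ℓ` defined by
`W_0 = 0`, `W_ℓ = S_ℓ^{ν/2} (I − P_ℓ (I − W_{ℓ−1}²) A_{ℓ−1}⁻¹ P_ℓᵀ A_ℓ) S_ℓ^{ν/2}`,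
one has `‖W_ℓ u‖_{A_ℓ} ≤ (2ν₀/ν) ‖u‖_{A_ℓ}` for all `ℓ ≤ N`. -/
theorem stmt5 (N : ℕ) (n : ℕ → ℕ)
    (A L : ∀ ℓ : ℕ, Matrix (Fin (n ℓ)) (Fin (n ℓ)) ℝ)
    (P : ∀ ℓ : ℕ, Matrix (Fin (n ℓ)) (Fin (n (ℓ - 1))) ℝ)
    (hA : ∀ ℓ : ℕ, ℓ ≤ N → (A ℓ).PosDef)
    (hL : ∀ ℓ : ℕ, 1 ≤ ℓ → ℓ ≤ N → (L ℓ).PosDef)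
    (hrank : ∀ ℓ : ℕ, 1 ≤ ℓ → ℓ ≤ N → (P ℓ).rank = n (ℓ - 1))
    (hGal : ∀ ℓ : ℕ, 1 ≤ ℓ → ℓ ≤ N → A (ℓ - 1) = (P ℓ)ᵀ * A ℓ * P ℓ)
    (C_I C_A : ℝ) (hCI : 0 < C_I) (hCA : 0 < C_A)
    (hinv : ∀ ℓ : ℕ, 1 ≤ ℓ → ℓ ≤ N → ∀ u : Fin (n ℓ) → ℝ,
        u ⬝ᵥ (A ℓ) *ᵥ u ≤ C_I * (u ⬝ᵥ (L ℓ) *ᵥ u))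
    (happrox : ∀ ℓ : ℕ, 1 ≤ ℓ → ℓ ≤ N → ∀ u : Fin (n ℓ) → ℝ,
        ((1 - P ℓ * (A (ℓ - 1))⁻¹ * ((P ℓ)ᵀ * A ℓ)) *ᵥ u) ⬝ᵥ
            (L ℓ) *ᵥ ((1 - P ℓ * (A (ℓ - 1))⁻¹ * ((P ℓ)ᵀ * A ℓ)) *ᵥ u)
          ≤ C_A * (u ⬝ᵥ (A ℓ) *ᵥ u))
    (τ : ℝ) (hτ0 : 0 < τ) (hτ1 : τ ≤ 1 / C_I)
    (ν : ℕ) (hνeven : Even ν) (hν : 4 * (C_A / τ) < (ν : ℝ))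
    (S : ∀ ℓ : ℕ, Matrix (Fin (n ℓ)) (Fin (n ℓ)) ℝ)
    (hS : ∀ ℓ : ℕ, S ℓ = 1 - τ • ((L ℓ)⁻¹ * A ℓ))
    (W : ∀ ℓ : ℕ, Matrix (Fin (n ℓ)) (Fin (n ℓ)) ℝ)
    (hW0 : W 0 = 0)
    (hWrec : ∀ ℓ : ℕ, 1 ≤ ℓ → ℓ ≤ N → W ℓ =
        (S ℓ) ^ (ν / 2) *
          (1 - P ℓ * (1 - (W (ℓ - 1)) ^ 2) * (A (ℓ - 1))⁻¹ * ((P ℓ)ᵀ * A ℓ)) *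
          (S ℓ) ^ (ν / 2)) :
    ∀ ℓ : ℕ, ℓ ≤ N → ∀ u : Fin (n ℓ) → ℝ,
      matNorm (A ℓ) ((W ℓ) *ᵥ u) ≤ (2 * (C_A / τ) / (ν : ℝ)) * matNorm (A ℓ) u :=
  stmt5_general N n A L P hA hL hGal C_I C_A hCI hCA hinv happrox τ hτ0 hτ1 ν hνeven hν S hS W hW0
    hWrec
end

section
/- There exists a constant C > 0, independent of p and n, such that for all integers p ≥ 1, all integers n > p, every linear subspace V ⊆ S̃_{p,n}, and all u ∈ S_{p,n}: ‖u‖²_{H¹(0,1)} ≤ C·( n²·‖u‖²_{L²(0,1)} + inf_{v ∈ V} ‖u − v‖²_{H¹(0,1)} ). (This is the robust inverse inequality for the boundary-corrected mass smoother L = h⁻²M + (I−Tᴵ)ᵀA(I−Tᴵ), where Tᴵ is the H¹-orthogonal projector onto V.) -/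
open MeasureTheory

/-- `u` belongs to the spline space `S_{p,n}` on `[0,1]` with uniform grid size
`h = 1/n`: it is `(p−1)`-times continuously differentiable on `[0,1]` and
coincides on each subinterval `[(i−1)h, ih]` with a polynomial of degree `≤ p`. -/
def IsSpline (p n : ℕ) (u : ℝ → ℝ) : Prop :=
  ContDiffOn ℝ (p - 1 : ℕ) u (Set.Icc 0 1) ∧
  ∀ i : ℕ, 1 ≤ i → i ≤ n →
    ∃ q : Polynomial ℝ, q.natDegree ≤ p ∧
      ∀ x ∈ Set.Icc (((i : ℝ) - 1) / n) ((i : ℝ) / n), u x = q.eval x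

/-- `u` belongs to the subspace `S̃_{p,n} ⊆ S_{p,n}` of splines whose odd-order
derivatives of order `< p` vanish at both endpoints of `[0,1]`. -/
def IsSplineTilde (p n : ℕ) (u : ℝ → ℝ) : Prop :=
  IsSpline p n u ∧
  ∀ l : ℕ, 2 * l + 1 < p →
    iteratedDerivWithin (2 * l + 1) u (Set.Icc 0 1) 0 = 0 ∧
    iteratedDerivWithin (2 * l + 1) u (Set.Icc 0 1) 1 = 0

/-- Squared `L²(0,1)`-norm. -/
noncomputable def L2sq (u : ℝ → ℝ) : ℝ := ∫ x in (0:ℝ)..1, u x ^ 2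

/-- Squared `H¹(0,1)`-seminorm (the derivative is taken pointwise; for the
functions considered it exists away from a finite set of knots). -/
noncomputable def H1semisq (u : ℝ → ℝ) : ℝ := ∫ x in (0:ℝ)..1, deriv u x ^ 2

/-- Squared `H¹(0,1)`-norm. -/
noncomputable def H1sq (u : ℝ → ℝ) : ℝ := L2sq u + H1semisq u

/-- `u` belongs to `H¹(0,1)` with (weak) derivative `u'`: `u` is continuous on
`[0,1]` and `u'` is square-integrable on `(0,1)` with
`u x = u 0 + ∫₀ˣ u'`. -/
def IsH1 (u u' : ℝ → ℝ) : Prop :=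
  ContinuousOn u (Set.Icc 0 1) ∧
  IntegrableOn u' (Set.Ioo 0 1) ∧
  IntegrableOn (fun x => u' x ^ 2) (Set.Ioo 0 1) ∧
  ∀ x ∈ Set.Icc (0:ℝ) 1, u x = u 0 + ∫ t in (0:ℝ)..x, u' t

/-!
Fix `v ∈ V` and put `z = u - v`. Splines whose derivatives of one fixed parity vanish at
`0` and `1` satisfy the inverse inequality `|w|²_{H¹} ≤ 12 n² ‖w‖²_{L²}`: for linear splines
it holds on every element, and in general `|w|²_{H¹} = -(w'', w)` (the boundary terms vanish),
while `w'` is again such a spline, of lower degree and with the opposite parity. For `v ∈ S̃` this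
applies to `v'`, and `|v|²_{H¹} = (v', u') - (v', z') = -(v'', u) - (v', z')` then bounds
`|v|_{H¹}` by `n ‖u‖_{L²} + |z|_{H¹}`, hence `|u|_{H¹} ≤ |v|_{H¹} + |z|_{H¹}` as well.
On piecewise polynomial representatives the `L²` product is a positive semidefinite bilinear
form, so after the integrations by parts the estimates are plain bilinear-form algebra.
-/

open Polynomial Set

namespace LinearMap.BilinForm

variable {M : Type*} [AddCommGroup M] [Module ℝ M] {B : LinearMap.BilinForm ℝ M}

theorem apply_add_smul_self (x y : M) (t : ℝ) :
    B (x + t • y) (x + t • y) = B x x + t * (B x y + B y x) + t ^ 2 * B y y := by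
  simp only [map_add, map_smul, LinearMap.add_apply, LinearMap.smul_apply, smul_eq_mul]
  ring

namespace IsPosSemidef

-- Think of `a = c'` and `b = c''`.
theorem apply_self_le_of_eq_neg_apply (hB : B.IsPosSemidef) {k : ℝ} (hk : 0 < k)
    {a b c : M} (hparts : B a a = -B b c) (hb : B b b ≤ k * B a a) : B a a ≤ k * B c c := by
  have hpos := hB.isNonneg.nonneg (b + k • c)
  rw [apply_add_smul_self, hB.isSymm.eq c b] at hpos
  have : k * B a a ≤ k * (k * B c c) := by nlinarith
  exact le_of_mul_le_mul_left this hk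

-- Think of `a = v'`, `b = v''` and `w = u'`.
theorem apply_self_le_of_eq_neg_apply_sub (hB : B.IsPosSemidef) {k : ℝ} (hk : 0 < k)
    {a b u w : M} (hparts : B a w = -B b u) (hb : B b b ≤ k * B a a) :
    B w w ≤ 4 * k * B u u + 6 * B (w - a) (w - a) := by
  generalize hz : w - a = z
  obtain rfl : w = a + z := by rw [← hz]; abel
  have hbu := hB.isNonneg.nonneg (b + (2 * k) • u)
  have haz := hB.isNonneg.nonneg (a + (2 : ℝ) • z)
  have haz' := hB.isNonneg.nonneg (a + (-1 : ℝ) • z)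
  rw [apply_add_smul_self] at hbu haz haz'
  simp only [map_add, LinearMap.add_apply] at hparts ⊢
  rw [hB.isSymm.eq u b, hB.isSymm.eq z a] at *
  have hA : B a a ≤ 2 * k * B u u + 2 * B z z := by
    refine le_of_mul_le_mul_left ?_ hk
    nlinarith
  linarith

end IsPosSemidef

end LinearMap.BilinForm

theorem Finset.sum_range_sub_of_eq_succ {G : Type*} [AddCommGroup G] {E F : ℕ → G} {n : ℕ}
    (hn : 0 < n) (h : ∀ k, k + 1 < n → E k = F (k + 1)) :
    ∑ k ∈ Finset.range n, (E k - F k) = E (n - 1) - F 0 := by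
  obtain ⟨m, rfl⟩ : ∃ m, n = m + 1 := ⟨n - 1, by omega⟩
  rw [Finset.sum_sub_distrib, Finset.sum_range_succ, Finset.sum_range_succ',
    Finset.sum_congr rfl fun k hk => h k (by simpa using hk), Nat.add_sub_cancel]
  abel

theorem Polynomial.iteratedDeriv_eval (P : ℝ[X]) (j : ℕ) :
    iteratedDeriv j (fun x => P.eval x) = fun x => (derivative^[j] P).eval x := by
  induction j generalizing P with
  | zero => simp
  | succ j ih =>
    have hderiv : _root_.deriv (fun x => P.eval x) = fun x => (derivative P).eval x := by
      ext x
      exact P.deriv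
    rw [iteratedDeriv_succ', hderiv, ih, Function.iterate_succ_apply]

theorem Polynomial.iteratedDerivWithin_eval {s : Set ℝ} (hs : UniqueDiffOn ℝ s) {x : ℝ}
    (hx : x ∈ s) (P : ℝ[X]) (j : ℕ) :
    iteratedDerivWithin j (fun x => P.eval x) s x = (derivative^[j] P).eval x := by
  have hP : ContDiff ℝ j (fun x => P.eval x) := by simpa using P.contDiff_aeval (𝕜 := ℝ) j
  rw [iteratedDerivWithin_eq_iteratedDeriv hs hP.contDiffAt hx, P.iteratedDeriv_eval]

theorem iteratedDerivWithin_eqOn_of_eqOn_Icc {s : Set ℝ} (hs : UniqueDiffOn ℝ s) {m j : ℕ}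
    (hj : j ≤ m) {u : ℝ → ℝ} (hu : ContDiffOn ℝ m u s) {a b : ℝ} (hab : a < b)
    (hsub : Icc a b ⊆ s) {P : ℝ[X]} (heq : EqOn u (fun x => P.eval x) (Icc a b)) :
    EqOn (iteratedDerivWithin j u s) (fun x => (derivative^[j] P).eval x) (Icc a b) := by
  refine EqOn.of_subset_closure (s := Ioo a b) (fun x hx => ?_)
    ((hu.continuousOn_iteratedDerivWithin (by exact_mod_cast hj) hs).mono hsub)
    (derivative^[j] P).continuous.continuousOn Ioo_subset_Icc_self (closure_Ioo hab.ne).ge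
  have hloc : u =ᶠ[nhdsWithin x s] fun x => P.eval x :=
    heq.eventuallyEq_of_mem (mem_nhdsWithin_of_mem_nhds (Icc_mem_nhds hx.1 hx.2))
  rw [hloc.iteratedDerivWithin_eq (heq (Ioo_subset_Icc_self hx)),
    P.iteratedDerivWithin_eval hs (hsub (Ioo_subset_Icc_self hx))]

namespace PiecewisePoly

noncomputable def knot (n k : ℕ) : ℝ := k / n

theorem knot_zero (n : ℕ) : knot n 0 = 0 := by simp [knot]

theorem knot_self {n : ℕ} (hn : n ≠ 0) : knot n n = 1 := div_self (Nat.cast_ne_zero.mpr hn)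

theorem knot_mono (n k : ℕ) : knot n k ≤ knot n (k + 1) := by
  unfold knot; gcongr; simp

theorem knot_lt_succ {n : ℕ} (hn : 0 < n) (k : ℕ) : knot n k < knot n (k + 1) := by
  unfold knot; gcongr; simp

theorem knot_succ_sub {n : ℕ} (k : ℕ) : knot n (k + 1) - knot n k = (n : ℝ)⁻¹ := by
  simp only [knot, Nat.cast_add, Nat.cast_one]
  ring

theorem Icc_knot_subset {n k : ℕ} (hk : k < n) : Icc (knot n k) (knot n (k + 1)) ⊆ Icc 0 1 := by
  refine Icc_subset_Icc (by unfold knot; positivity) ?_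
  unfold knot
  exact div_le_one_of_le₀ (by exact_mod_cast hk) (Nat.cast_nonneg n)

theorem intervalIntegrable_eval_mul_eval (P R : ℝ[X]) (a b : ℝ) :
    IntervalIntegrable (fun x => P.eval x * R.eval x) volume a b :=
  (P.continuous.mul R.continuous).intervalIntegrable a b

/-- A piecewise polynomial is encoded as `Q : ℕ → ℝ[X]`, the piece `Q k` living on
`[k/n, (k+1)/n]` (pieces with `k ≥ n` play no role); this is the `L²(0,1)` product. -/
noncomputable def pieceInner (n : ℕ) : LinearMap.BilinForm ℝ (ℕ → ℝ[X]) :=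
  LinearMap.mk₂ ℝ
    (fun Q R =>
      ∑ k ∈ Finset.range n, ∫ x in knot n k..knot n (k + 1), (Q k).eval x * (R k).eval x)
    (fun Q Q' R => by
      simp only [Pi.add_apply, eval_add, add_mul, ← Finset.sum_add_distrib]
      exact Finset.sum_congr rfl fun k _ => intervalIntegral.integral_add
        (intervalIntegrable_eval_mul_eval _ _ _ _) (intervalIntegrable_eval_mul_eval _ _ _ _))
    (fun c Q R => by
      simp only [Pi.smul_apply, eval_smul, smul_eq_mul, mul_assoc, Finset.mul_sum,
        intervalIntegral.integral_const_mul])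
    (fun Q R R' => by
      simp only [Pi.add_apply, eval_add, mul_add, ← Finset.sum_add_distrib]
      exact Finset.sum_congr rfl fun k _ => intervalIntegral.integral_add
        (intervalIntegrable_eval_mul_eval _ _ _ _) (intervalIntegrable_eval_mul_eval _ _ _ _))
    (fun c Q R => by
      simp only [Pi.smul_apply, eval_smul, smul_eq_mul, mul_left_comm _ c, Finset.mul_sum,
        intervalIntegral.integral_const_mul])

theorem pieceInner_apply (n : ℕ) (Q R : ℕ → ℝ[X]) :
    pieceInner n Q R =
      ∑ k ∈ Finset.range n, ∫ x in knot n k..knot n (k + 1), (Q k).eval x * (R k).eval x :=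
  rfl

theorem isPosSemidef_pieceInner (n : ℕ) : (pieceInner n).IsPosSemidef where
  eq Q R := by simp only [pieceInner_apply, mul_comm]
  nonneg Q := by
    rw [pieceInner_apply]
    exact Finset.sum_nonneg fun k _ =>
      intervalIntegral.integral_nonneg (knot_mono n k) fun x _ => mul_self_nonneg _

def DerivsMatch (n m : ℕ) (Q : ℕ → ℝ[X]) : Prop :=
  ∀ j ≤ m, ∀ k, k + 1 < n →
    (derivative^[j] (Q k)).eval (knot n (k + 1)) =
      (derivative^[j] (Q (k + 1))).eval (knot n (k + 1))

/-- For `e = 1` these are the boundary conditions of `S̃_{p,n}`; differentiation flips the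
parity `e`. -/
def BoundaryDerivsVanish (n p e : ℕ) (Q : ℕ → ℝ[X]) : Prop :=
  ∀ j < p, Even (j + e) →
    (derivative^[j] (Q 0)).eval 0 = 0 ∧ (derivative^[j] (Q (n - 1))).eval 1 = 0

theorem DerivsMatch.mono {n m m' : ℕ} {Q : ℕ → ℝ[X]} (h : DerivsMatch n m Q) (hm : m' ≤ m) :
    DerivsMatch n m' Q :=
  fun j hj => h j (hj.trans hm)

theorem DerivsMatch.derivative {n m : ℕ} {Q : ℕ → ℝ[X]} (h : DerivsMatch n (m + 1) Q) :
    DerivsMatch n m (derivative ∘ Q) := by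
  intro j hj k hk
  simpa only [Function.comp_apply, ← Function.iterate_succ_apply] using
    h (j + 1) (by omega) k hk

theorem BoundaryDerivsVanish.derivative {n p e : ℕ} {Q : ℕ → ℝ[X]}
    (h : BoundaryDerivsVanish n (p + 1) e Q) :
    BoundaryDerivsVanish n p (e + 1) (derivative ∘ Q) := by
  intro j hj he
  simpa only [Function.comp_apply, ← Function.iterate_succ_apply] using
    h (j + 1) (by omega) (by rwa [add_right_comm, add_assoc])

theorem integral_derivative_mul_derivative (a b : ℝ) (P R : ℝ[X]) :
    ∫ x in a..b, (derivative P).eval x * (derivative R).eval x =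
      (derivative P).eval b * R.eval b - (derivative P).eval a * R.eval a -
        ∫ x in a..b, (derivative (derivative P)).eval x * R.eval x :=
  intervalIntegral.integral_mul_deriv_eq_deriv_mul (fun x _ => (derivative P).hasDerivAt x)
    (fun x _ => R.hasDerivAt x) ((derivative (derivative P)).continuous.intervalIntegrable a b)
    ((derivative R).continuous.intervalIntegrable a b)

theorem pieceInner_derivative_derivative {n : ℕ} (hn : 0 < n) {Q R : ℕ → ℝ[X]}
    (hQ : DerivsMatch n 1 Q) (hR : DerivsMatch n 0 R)
    (h0 : (derivative (Q 0)).eval 0 * (R 0).eval 0 = 0)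
    (h1 : (derivative (Q (n - 1))).eval 1 * (R (n - 1)).eval 1 = 0) :
    pieceInner n (derivative ∘ Q) (derivative ∘ R) =
      -pieceInner n (derivative ∘ derivative ∘ Q) R := by
  set E : ℕ → ℝ := fun k =>
    (derivative (Q k)).eval (knot n (k + 1)) * (R k).eval (knot n (k + 1))
  set F : ℕ → ℝ := fun k => (derivative (Q k)).eval (knot n k) * (R k).eval (knot n k)
  have htel : ∑ k ∈ Finset.range n, (E k - F k) = 0 := by
    refine (Finset.sum_range_sub_of_eq_succ hn fun k hk => ?_).trans ?_
    · have hQk := hQ 1 le_rfl k hk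
      have hRk := hR 0 le_rfl k hk
      simp only [Function.iterate_one, Function.iterate_zero_apply] at hQk hRk
      simp only [E, F, hQk, hRk]
    · simp only [E, F, knot_zero, Nat.sub_add_cancel hn, knot_self hn.ne', h0, h1, sub_zero]
  simp only [pieceInner_apply, Function.comp_apply, integral_derivative_mul_derivative,
    Finset.sum_sub_distrib]
  rw [Finset.sum_sub_distrib] at htel
  linear_combination htel

theorem integral_derivative_sq_le_of_natDegree_le_one {a b : ℝ} (hab : a ≤ b) {P : ℝ[X]}
    (hP : P.natDegree ≤ 1) :
    (b - a) ^ 2 * ∫ x in a..b, (derivative P).eval x ^ 2 ≤ 12 * ∫ x in a..b, P.eval x ^ 2 := by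
  obtain ⟨c, d, rfl⟩ := exists_eq_X_add_C_of_natDegree_le_one hP
  have hsq : ∀ x : ℝ, (c * x + d) ^ 2 = c ^ 2 * x ^ 2 + 2 * c * d * x + d ^ 2 := fun x => by ring
  simp only [derivative_add, derivative_mul, derivative_C, derivative_X, eval_add, eval_mul,
    eval_C, eval_X, zero_mul, mul_one, add_zero, zero_add, hsq]
  rw [intervalIntegral.integral_add, intervalIntegral.integral_add,
    intervalIntegral.integral_const_mul, intervalIntegral.integral_const_mul, integral_pow,
    integral_id]
  all_goals try exact Continuous.intervalIntegrable (by fun_prop) _ _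
  simp only [intervalIntegral.integral_const, smul_eq_mul]
  -- `∫ₐᵇ (c x + d)² = (b - a) (m² + c² (b - a)² / 12)` with `m` the value at the midpoint
  nlinarith [mul_nonneg (sub_nonneg.mpr hab) (sq_nonneg (d + c * (a + b) / 2))]

theorem pieceInner_derivative_le_of_natDegree_le_one (n : ℕ) {Q : ℕ → ℝ[X]}
    (hQ : ∀ k, (Q k).natDegree ≤ 1) :
    pieceInner n (derivative ∘ Q) (derivative ∘ Q) ≤ 12 * n ^ 2 * pieceInner n Q Q := by
  simp only [pieceInner_apply, Function.comp_apply, ← sq, Finset.mul_sum]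
  gcongr with k hk
  have hn : (0 : ℝ) < n := by exact_mod_cast (Finset.mem_range.mp hk).trans_le' (Nat.zero_le k)
  have h := integral_derivative_sq_le_of_natDegree_le_one (knot_mono n k) (hQ k)
  rw [knot_succ_sub] at h
  calc ∫ x in knot n k..knot n (k + 1), (derivative (Q k)).eval x ^ 2
      = n ^ 2 * ((n : ℝ)⁻¹ ^ 2 *
          ∫ x in knot n k..knot n (k + 1), (derivative (Q k)).eval x ^ 2) := by
        field_simp
    _ ≤ n ^ 2 * (12 * ∫ x in knot n k..knot n (k + 1), (Q k).eval x ^ 2) := by gcongr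
    _ = _ := by ring

theorem pieceInner_derivative_le {n : ℕ} (hn : 0 < n) {m e : ℕ} {Q : ℕ → ℝ[X]}
    (hdeg : ∀ k, (Q k).natDegree ≤ m + 1) (hQ : DerivsMatch n m Q)
    (hbd : BoundaryDerivsVanish n (m + 1) e Q) :
    pieceInner n (derivative ∘ Q) (derivative ∘ Q) ≤ 12 * n ^ 2 * pieceInner n Q Q := by
  induction m generalizing e Q with
  | zero => exact pieceInner_derivative_le_of_natDegree_le_one n hdeg
  | succ m ih =>
    have hends : (derivative (Q 0)).eval 0 * (Q 0).eval 0 = 0 ∧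
        (derivative (Q (n - 1))).eval 1 * (Q (n - 1)).eval 1 = 0 := by
      rcases Nat.even_or_odd e with he | he
      · obtain ⟨h0, h1⟩ := hbd 0 (by omega) (by simpa using he)
        simp only [Function.iterate_zero_apply] at h0 h1
        simp [h0, h1]
      · obtain ⟨h0, h1⟩ := hbd 1 (by omega) (by simpa [add_comm] using he.add_one)
        simp only [Function.iterate_one] at h0 h1
        simp [h0, h1]
    refine (isPosSemidef_pieceInner n).apply_self_le_of_eq_neg_apply (by positivity)
      (pieceInner_derivative_derivative hn (hQ.mono (by omega)) (hQ.mono (by omega))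
        hends.1 hends.2) ?_
    refine ih (fun k => ?_) hQ.derivative hbd.derivative
    exact (natDegree_derivative_le _).trans (by have := hdeg k; omega)

theorem pieceInner_derivative_le_of_sub {n m : ℕ} (hn : 0 < n) {Q R : ℕ → ℝ[X]}
    (hQ : DerivsMatch n 0 Q) (hdeg : ∀ k, (R k).natDegree ≤ m + 2)
    (hR : DerivsMatch n (m + 1) R) (hbd : BoundaryDerivsVanish n (m + 2) 1 R) :
    pieceInner n (derivative ∘ Q) (derivative ∘ Q) ≤ 48 * n ^ 2 * pieceInner n Q Q +
      6 * pieceInner n (derivative ∘ (Q - R)) (derivative ∘ (Q - R)) := by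
  obtain ⟨h0, h1⟩ := hbd 1 (by omega) (by decide)
  simp only [Function.iterate_one] at h0 h1
  have hparts := pieceInner_derivative_derivative hn (hR.mono (by omega)) hQ
    (by rw [h0, zero_mul]) (by rw [h1, zero_mul])
  have hinv := pieceInner_derivative_le hn
    (fun k => (natDegree_derivative_le (R k)).trans (by have := hdeg k; omega))
    hR.derivative hbd.derivative
  have hsub : derivative ∘ (Q - R) = derivative ∘ Q - derivative ∘ R := by
    ext1 k; simp
  have := (isPosSemidef_pieceInner n).apply_self_le_of_eq_neg_apply_sub
    (by positivity : (0 : ℝ) < 12 * n ^ 2) hparts hinv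
  rw [hsub]
  linarith

def Represents (n : ℕ) (Q : ℕ → ℝ[X]) (u : ℝ → ℝ) : Prop :=
  ∀ k < n, EqOn u (fun x => (Q k).eval x) (Icc (knot n k) (knot n (k + 1)))

theorem Represents.sub {n : ℕ} {Q R : ℕ → ℝ[X]} {u v : ℝ → ℝ} (hu : Represents n Q u)
    (hv : Represents n R v) : Represents n (Q - R) (fun x => u x - v x) :=
  fun k hk x hx => by simp [hu k hk hx, hv k hk hx]

theorem Represents.derivsMatch {n m : ℕ} (hn : 0 < n) {Q : ℕ → ℝ[X]} {u : ℝ → ℝ}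
    (hQ : Represents n Q u) (hu : ContDiffOn ℝ m u (Icc 0 1)) : DerivsMatch n m Q := by
  intro j hj k hk
  have hI := fun k (hk : k < n) => iteratedDerivWithin_eqOn_of_eqOn_Icc
    (uniqueDiffOn_Icc zero_lt_one) hj hu (knot_lt_succ hn k) (Icc_knot_subset hk) (hQ k hk)
  exact (hI k (by omega) (right_mem_Icc.2 (knot_mono n k))).symm.trans
    (hI (k + 1) hk (left_mem_Icc.2 (knot_mono n (k + 1))))

theorem integral_eq_sum_pieces {n : ℕ} (hn : 0 < n) {f : ℝ → ℝ} {g : ℕ → ℝ → ℝ}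
    (hg : ∀ k, Continuous (g k))
    (hfg : ∀ k < n, EqOn f (g k) (Ioo (knot n k) (knot n (k + 1)))) :
    ∫ x in (0 : ℝ)..1, f x = ∑ k ∈ Finset.range n, ∫ x in knot n k..knot n (k + 1), g k x := by
  have hsplit := intervalIntegral.sum_integral_adjacent_intervals (a := knot n)
    (μ := volume) fun k hk => ((hg k).intervalIntegrable _ _).congr_uIoo
      (by rw [uIoo_of_le (knot_mono n k)]; exact (hfg k hk).symm)
  rw [knot_zero, knot_self hn.ne'] at hsplit
  rw [← hsplit]
  exact Finset.sum_congr rfl fun k hk =>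
    intervalIntegral.integral_congr_Ioo_of_le (knot_mono n k) (hfg k (Finset.mem_range.mp hk))

theorem L2sq_eq_pieceInner {n : ℕ} (hn : 0 < n) {Q : ℕ → ℝ[X]} {u : ℝ → ℝ}
    (hQ : Represents n Q u) : L2sq u = pieceInner n Q Q := by
  rw [L2sq, pieceInner_apply]
  exact integral_eq_sum_pieces hn (fun k => (Q k).continuous.mul (Q k).continuous)
    fun k hk x hx => by simp [sq, hQ k hk (Ioo_subset_Icc_self hx)]

theorem H1semisq_eq_pieceInner {n : ℕ} (hn : 0 < n) {Q : ℕ → ℝ[X]} {u : ℝ → ℝ}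
    (hQ : Represents n Q u) : H1semisq u = pieceInner n (derivative ∘ Q) (derivative ∘ Q) := by
  rw [H1semisq, pieceInner_apply]
  refine integral_eq_sum_pieces hn (fun k => (derivative (Q k)).continuous.mul
    (derivative (Q k)).continuous) fun k hk x hx => ?_
  have hloc := (hQ k hk).eventuallyEq_of_mem (Icc_mem_nhds hx.1 hx.2)
  simp [sq, hloc.deriv_eq]

end PiecewisePoly

open PiecewisePoly

theorem IsSpline.exists_represents {p n : ℕ} {u : ℝ → ℝ} (hu : IsSpline p n u) :
    ∃ Q : ℕ → ℝ[X], (∀ k, (Q k).natDegree ≤ p) ∧ Represents n Q u := by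
  have hpiece : ∀ k, ∃ q : ℝ[X], q.natDegree ≤ p ∧
      (k < n → EqOn u (fun x => q.eval x) (Icc (knot n k) (knot n (k + 1)))) := by
    intro k
    by_cases hk : k < n
    · obtain ⟨q, hdeg, hq⟩ := hu.2 (k + 1) (by omega) hk
      exact ⟨q, hdeg, fun _ x hx => hq x (by simpa [knot] using hx)⟩
    · exact ⟨0, by simp, fun h => absurd h hk⟩
  choose Q hdeg hQ using hpiece
  exact ⟨Q, hdeg, hQ⟩

theorem IsSplineTilde.boundaryDerivsVanish {p n : ℕ} (hn : 0 < n) {v : ℝ → ℝ}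
    (hv : IsSplineTilde p n v) {R : ℕ → ℝ[X]} (hR : Represents n R v) :
    BoundaryDerivsVanish n p 1 R := by
  intro j hj hodd
  obtain ⟨l, rfl⟩ : Odd j := Nat.not_even_iff_odd.mp (Nat.even_add_one.mp hodd)
  have hI := fun k (hk : k < n) => iteratedDerivWithin_eqOn_of_eqOn_Icc
    (uniqueDiffOn_Icc zero_lt_one) (by omega : 2 * l + 1 ≤ p - 1) hv.1.1 (knot_lt_succ hn k)
    (Icc_knot_subset hk) (hR k hk)
  have hleft := hI 0 hn (left_mem_Icc.2 (knot_mono n 0))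
  have hright := hI (n - 1) (by omega) (right_mem_Icc.2 (knot_mono n (n - 1)))
  simp only [knot_zero, Nat.sub_add_cancel hn, knot_self hn.ne'] at hleft hright
  obtain ⟨h0, h1⟩ := hv.2 l hj
  exact ⟨hleft.symm.trans h0, hright.symm.trans h1⟩

theorem L2sq_nonneg (u : ℝ → ℝ) : 0 ≤ L2sq u :=
  intervalIntegral.integral_nonneg zero_le_one fun _ _ => sq_nonneg _

theorem H1semisq_nonneg (u : ℝ → ℝ) : 0 ≤ H1semisq u :=
  intervalIntegral.integral_nonneg zero_le_one fun _ _ => sq_nonneg _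

theorem H1semisq_le_of_isSplineTilde {p n : ℕ} (hn : 0 < n) {u v : ℝ → ℝ}
    (hu : IsSpline p n u) (hv : IsSplineTilde p n v) :
    H1semisq u ≤ 48 * n ^ 2 * L2sq u + 6 * H1semisq (fun x => u x - v x) := by
  obtain ⟨Q, hQdeg, hQ⟩ := hu.exists_represents
  obtain ⟨R, hRdeg, hR⟩ := hv.1.exists_represents
  rw [L2sq_eq_pieceInner hn hQ, H1semisq_eq_pieceInner hn hQ,
    H1semisq_eq_pieceInner hn (hQ.sub hR)]
  obtain hp | ⟨m, rfl⟩ : p ≤ 1 ∨ ∃ m, p = m + 2 := by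
    rcases p with _ | _ | m <;> simp
  · have hinv := pieceInner_derivative_le_of_natDegree_le_one n fun k => (hQdeg k).trans hp
    have := (isPosSemidef_pieceInner n).isNonneg.nonneg Q
    have := (isPosSemidef_pieceInner n).isNonneg.nonneg (derivative ∘ (Q - R))
    nlinarith
  · exact pieceInner_derivative_le_of_sub hn ((hQ.derivsMatch hn hu.1).mono (Nat.zero_le _))
      hRdeg (hR.derivsMatch hn hv.1.1) (hv.boundaryDerivsVanish hn hR)

theorem H1sq_le_of_isSplineTilde {p n : ℕ} (hn : 0 < n) {u v : ℝ → ℝ}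
    (hu : IsSpline p n u) (hv : IsSplineTilde p n v) :
    H1sq u ≤ 49 * ((n : ℝ) ^ 2 * L2sq u + H1sq (fun x => u x - v x)) := by
  have hsemi := H1semisq_le_of_isSplineTilde hn hu hv
  have hn1 : (1 : ℝ) ≤ (n : ℝ) ^ 2 := one_le_pow₀ (by exact_mod_cast hn)
  have hL := L2sq_nonneg u
  have hL' := L2sq_nonneg (fun x => u x - v x)
  have hH' := H1semisq_nonneg (fun x => u x - v x)
  rw [H1sq, H1sq]
  nlinarith

/-- robust inverse inequality for the boundary-corrected mass
smoother with an arbitrary subspace `V ⊆ S̃_{p,n}`: there is `C > 0`,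
independent of `p` and `n`, with
`‖u‖²_{H¹} ≤ C (n² ‖u‖²_{L²} + inf_{v ∈ V} ‖u−v‖²_{H¹})`
for all `u ∈ S_{p,n}`. -/
theorem stmt11 :
    ∃ C : ℝ, 0 < C ∧
      ∀ p n : ℕ, 1 ≤ p → p < n →
        ∀ V : Submodule ℝ (ℝ → ℝ), (∀ v ∈ V, IsSplineTilde p n v) →
        ∀ u : ℝ → ℝ, IsSpline p n u →
          H1sq u ≤ C * ((n : ℝ) ^ 2 * L2sq u +
            sInf {t : ℝ | ∃ v ∈ V, t = H1sq (fun x => u x - v x)}) := by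
  refine ⟨49, by norm_num, fun p n _ hpn V hV u hu => ?_⟩
  have hinf : H1sq u / 49 - n ^ 2 * L2sq u ≤
      sInf {t : ℝ | ∃ v ∈ V, t = H1sq (fun x => u x - v x)} := by
    refine le_csInf ⟨_, 0, V.zero_mem, rfl⟩ ?_
    rintro _ ⟨v, hv, rfl⟩
    linarith [H1sq_le_of_isSplineTilde (by omega : 0 < n) hu (hV v hv)]
  linarith
end
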